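/- arXiv:1605.07892 — 5 statements merged into one kernel-verified Lean document; each statement's English description precedes it below -/
import Mathlib

section
/- Let n ≥ 1, let a = (a₀,…,aₙ) be a tuple of integers with a_k ≥ 2, and define f : ℂ^{n+1} → ℂ by f(z) = z₀^{a₀} + ⋯ + zₙ^{aₙ} and ρ(z) = ∑ z_k·conj(z_k) = ‖z‖². Then: (1) every t ≠ 0 is a regular value of f, so V_a(t) = f⁻¹(t) is a smooth complex hypersurface; and (2) (0,1) is a regular value of the map (f, ρ) : ℂ^{n+1}∖{0} → ℂ × ℝ, so the Brieskorn manifold Σ_a = {z : f(z) = 0, ‖z‖ = 1} is a smooth real submanifold of ℂ^{n+1} of dimension 2n−1. -/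
/-!
The weighted Euler vector `e = (z_k / a_k)_k` does everything. Differentiating
`f = ∑ z_k ^ a_k` along `e` gives back `f z`, and differentiating `ρ = ∑ |z_k|²` along `e`
gives `2 ∑ |z_k|² / a_k > 0`. So if `f z ≠ 0` the differential of `f` is a nonzero
`ℂ`-linear functional, hence surjective. On `f = 0` the vector `e` lies in the kernel of `df`
but not in that of `dρ`, and together with surjectivity of `df` this makes `(df, dρ)` onto.
-/

open Function Finset Complex ComplexConjugate

theorem LinearMap.surjective_prod_of_mem_ker {K M N : Type*} [Field K] [AddCommGroup M]
    [Module K M] [AddCommGroup N] [Module K N] {L : M →ₗ[K] N} (hL : Surjective L)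
    (ℓ : M →ₗ[K] K) {v : M} (hv : v ∈ ker L) (hℓv : ℓ v ≠ 0) : Surjective (L.prod ℓ) := by
  rintro ⟨y, s⟩
  obtain ⟨u, rfl⟩ := hL y
  refine ⟨u + ((s - ℓ u) / ℓ v) • v, ?_⟩
  rw [LinearMap.mem_ker] at hv
  simp [hv, hℓv]

theorem DifferentiableAt.surjective_fderiv_of_apply_ne_zero (𝕜 : Type*) {𝕜' E : Type*}
    [NontriviallyNormedField 𝕜] [NontriviallyNormedField 𝕜'] [NormedAlgebra 𝕜 𝕜']
    [NormedAddCommGroup E] [NormedSpace 𝕜 E] [NormedSpace 𝕜' E] [IsScalarTower 𝕜 𝕜' E]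
    {f : E → 𝕜'} {z v : E} (hf : DifferentiableAt 𝕜' f z) (hv : fderiv 𝕜' f z v ≠ 0) :
    Surjective (fderiv 𝕜 f z) := by
  rw [hf.fderiv_restrictScalars 𝕜]
  exact LinearMap.surjective_of_ne_zero (f := (fderiv 𝕜' f z : E →ₗ[𝕜'] 𝕜'))
    fun h => hv (LinearMap.congr_fun h v)

section SumPow

variable {𝕜 ι : Type*} [NontriviallyNormedField 𝕜] [Fintype ι]

theorem hasFDerivAt_sum_pow (a : ι → ℕ) (z : ι → 𝕜) :
    HasFDerivAt (fun w : ι → 𝕜 => ∑ k, w k ^ a k)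
      (∑ k, (a k * z k ^ (a k - 1) : 𝕜) •
        ContinuousLinearMap.proj (R := 𝕜) (φ := fun _ : ι => 𝕜) k) z :=
  HasFDerivAt.fun_sum fun k _ =>
    (hasDerivAt_pow (a k) (z k)).comp_hasFDerivAt z (hasFDerivAt_apply k z)

theorem fderiv_sum_pow_apply (a : ι → ℕ) (z v : ι → 𝕜) :
    fderiv 𝕜 (fun w : ι → 𝕜 => ∑ k, w k ^ a k) z v = ∑ k, a k * z k ^ (a k - 1) * v k := by
  simp [(hasFDerivAt_sum_pow a z).fderiv]

theorem fderiv_sum_pow_apply_single [DecidableEq ι] (a : ι → ℕ) (z : ι → 𝕜) (j : ι) :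
    fderiv 𝕜 (fun w : ι → 𝕜 => ∑ k, w k ^ a k) z (Pi.single j 1) = a j * z j ^ (a j - 1) := by
  simp [fderiv_sum_pow_apply, Pi.single_apply]

theorem fderiv_sum_pow_apply_div [CharZero 𝕜] {a : ι → ℕ} (ha : ∀ k, a k ≠ 0) (z : ι → 𝕜) :
    fderiv 𝕜 (fun w : ι → 𝕜 => ∑ k, w k ^ a k) z (fun k => z k / a k) = ∑ k, z k ^ a k := by
  rw [fderiv_sum_pow_apply]
  refine Finset.sum_congr rfl fun k _ => ?_
  have : (a k : 𝕜) ≠ 0 := by exact_mod_cast ha k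
  rw [mul_assoc, ← mul_div_assoc, ← pow_succ, Nat.sub_add_cancel (Nat.one_le_iff_ne_zero.2 (ha k))]
  field_simp

end SumPow

section SumNormSq

variable {ι : Type*} [Fintype ι]

theorem hasFDerivAt_sum_normSq (z : ι → ℂ) :
    HasFDerivAt (fun w : ι → ℂ => ∑ k, normSq (w k))
      (∑ k, (2 • innerSL ℝ (z k)).comp
        (ContinuousLinearMap.proj (R := ℝ) (φ := fun _ : ι => ℂ) k)) z := by
  simp only [normSq_eq_norm_sq]
  exact HasFDerivAt.fun_sum fun k _ => (hasFDerivAt_apply k z).norm_sq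

theorem fderiv_sum_normSq_apply (z v : ι → ℂ) :
    fderiv ℝ (fun w : ι → ℂ => ∑ k, normSq (w k)) z v = ∑ k, 2 * (conj (z k) * v k).re := by
  simp [(hasFDerivAt_sum_normSq z).fderiv, Complex.inner, mul_comm, add_mul]

theorem fderiv_sum_normSq_apply_div (a : ι → ℕ) (z : ι → ℂ) :
    fderiv ℝ (fun w : ι → ℂ => ∑ k, normSq (w k)) z (fun k => z k / a k) =
      2 * ∑ k, normSq (z k) / a k := by
  rw [fderiv_sum_normSq_apply, mul_sum]
  refine Finset.sum_congr rfl fun k _ => ?_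
  rw [← mul_div_assoc, ← normSq_eq_conj_mul_self, ← ofReal_natCast, ← ofReal_div, ofReal_re]

theorem sum_normSq_div_pos {a : ι → ℕ} (ha : ∀ k, a k ≠ 0) {z : ι → ℂ} (hz : z ≠ 0) :
    0 < ∑ k, normSq (z k) / a k := by
  obtain ⟨j, hj⟩ := Function.ne_iff.1 hz
  refine Finset.sum_pos' (fun k _ => div_nonneg (normSq_nonneg _) (Nat.cast_nonneg _))
    ⟨j, mem_univ j, div_pos (normSq_pos.2 hj) ?_⟩
  exact_mod_cast Nat.pos_of_ne_zero (ha j)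

end SumNormSq

theorem stmt6_general (n : ℕ) (a : Fin (n + 1) → ℕ) (ha : ∀ k, 2 ≤ a k) :
    (∀ t : ℂ, t ≠ 0 → ∀ z : Fin (n + 1) → ℂ, (∑ k, z k ^ a k) = t →
      Function.Surjective (fderiv ℝ (fun w : Fin (n + 1) → ℂ => ∑ k, w k ^ a k) z)) ∧
    (∀ z : Fin (n + 1) → ℂ, z ≠ 0 → (∑ k, z k ^ a k) = 0 →
      (∑ k, Complex.normSq (z k)) = 1 →
      Function.Surjective (fderiv ℝ
        (fun w : Fin (n + 1) → ℂ => ((∑ k, w k ^ a k), ∑ k, Complex.normSq (w k))) z)) := by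
  have ha0 : ∀ k, a k ≠ 0 := fun k => (zero_lt_two.trans_le (ha k)).ne'
  have hdiff (z : Fin (n + 1) → ℂ) := (hasFDerivAt_sum_pow a z).differentiableAt
  refine ⟨fun t ht z hz => ?_, fun z hz hz0 _ => ?_⟩
  · refine (hdiff z).surjective_fderiv_of_apply_ne_zero ℝ (v := fun k => z k / a k) ?_
    rwa [fderiv_sum_pow_apply_div ha0, hz]
  obtain ⟨j, hj⟩ := Function.ne_iff.1 hz
  rw [((hdiff z).restrictScalars ℝ).fderiv_prodMk (hasFDerivAt_sum_normSq z).differentiableAt]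
  refine LinearMap.surjective_prod_of_mem_ker (v := fun k => z k / a k)
    ((hdiff z).surjective_fderiv_of_apply_ne_zero ℝ (v := Pi.single j 1) ?_) _ ?_ ?_
  · rw [fderiv_sum_pow_apply_single]
    exact mul_ne_zero (Nat.cast_ne_zero.2 (ha0 j)) (pow_ne_zero _ hj)
  · rw [LinearMap.mem_ker, ContinuousLinearMap.coe_coe, (hdiff z).fderiv_restrictScalars ℝ,
      ContinuousLinearMap.coe_restrictScalars', fderiv_sum_pow_apply_div ha0, hz0]
  · rw [ContinuousLinearMap.coe_coe, fderiv_sum_normSq_apply_div]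
    exact (mul_pos two_pos (sum_normSq_div_pos ha0 hz)).ne'

/-- For `f(z) = z₀^{a₀} + ⋯ + zₙ^{aₙ}` on `ℂ^{n+1}` with all `a_k ≥ 2`:
(1) every `t ≠ 0` is a regular value of `f` (the real differential is surjective on the
preimage), so `V_a(t)` is smooth; and
(2) `(0,1)` is a regular value of `(f, ‖·‖²)` away from the origin, so the Brieskorn
manifold `Σ_a = {f = 0, ‖z‖ = 1}` is a smooth submanifold of real dimension `2n-1`. -/
theorem stmt6 (n : ℕ) (hn : 1 ≤ n) (a : Fin (n + 1) → ℕ) (ha : ∀ k, 2 ≤ a k) :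
    (∀ t : ℂ, t ≠ 0 → ∀ z : Fin (n + 1) → ℂ, (∑ k, z k ^ a k) = t →
      Function.Surjective (fderiv ℝ (fun w : Fin (n + 1) → ℂ => ∑ k, w k ^ a k) z)) ∧
    (∀ z : Fin (n + 1) → ℂ, z ≠ 0 → (∑ k, z k ^ a k) = 0 →
      (∑ k, Complex.normSq (z k)) = 1 →
      Function.Surjective (fderiv ℝ
        (fun w : Fin (n + 1) → ℂ => ((∑ k, w k ^ a k), ∑ k, Complex.normSq (w k))) z)) :=
  stmt6_general n a ha
end

section
/- Let a = (a₀,…,aₙ) with integers a_k ≥ 2 and let Σ_a = {z ∈ ℂ^{n+1} : ∑ z_k^{a_k} = 0, ‖z‖ = 1}. Define the real 1-form λ_a by λ_a(z)(ξ) = (1/4)·∑_{k} a_k·Im(z_k·conj(ξ_k)), the real 2-form ω_a by ω_a(ξ, ζ) = −(1/2)·∑_k a_k·Im(ξ_k·conj(ζ_k)), and R_a(z) = 4i·(z₀/a₀, …, zₙ/aₙ). Then for every z ∈ Σ_a: (1) R_a(z) is tangent to Σ_a at z; (2) λ_a(z)(R_a(z)) = 1; and (3) ω_a(R_a(z), ξ)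 = 0 for every ξ tangent to Σ_a at z. -/
/-! Since `a_k R_a(z)_k = 4i z_k`, every pairing with `R_a` collapses to a quadratic expression in
`z`: `dF(R_a) = 4i F(z)` vanishes on `Σ_a`, `conj z_k · R_a(z)_k` is purely imaginary (so `R_a` is
tangent to the sphere), `λ_a(R_a) = ‖z‖² = 1`, and `ω_a(R_a, ξ)` is a multiple of
`Re ∑ conj z_k ξ_k`, which vanishes for `ξ` tangent to the sphere. -/

/-- The Reeb vector field `R_a(z) = 4i (z₀/a₀, …, zₙ/aₙ)` on the Brieskorn manifold. -/
noncomputable def Ra (n : ℕ) (a : Fin (n + 1) → ℕ) (z : Fin (n + 1) → ℂ) : Fin (n + 1) → ℂ :=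
  fun k => 4 * Complex.I * z k / (a k : ℂ)

open Complex ComplexConjugate

theorem Complex.re_conj_mul_add_mul_conj (z w : ℂ) :
    (conj z * w + z * conj w).re = 2 * (z * conj w).re := by
  simp only [add_re, mul_re, conj_re, conj_im]
  ring

section Reeb

variable {n : ℕ} {a : Fin (n + 1) → ℕ} {k : Fin (n + 1)}

theorem natCast_mul_Ra (hk : a k ≠ 0) (z : Fin (n + 1) → ℂ) :
    (a k : ℂ) * Ra n a z k = 4 * I * z k :=
  mul_div_cancel₀ _ (Nat.cast_ne_zero.mpr hk)

theorem conj_mul_Ra (z : Fin (n + 1) → ℂ) :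
    conj (z k) * Ra n a z k = ((4 * normSq (z k) / a k : ℝ) : ℂ) * I := by
  simp only [Ra, ofReal_div, ofReal_mul, normSq_eq_conj_mul_self, ofReal_natCast]
  push_cast
  ring

theorem conj_mul_Ra_add_mul_conj_Ra (z : Fin (n + 1) → ℂ) :
    conj (z k) * Ra n a z k + z k * conj (Ra n a z k) = 0 := by
  rw [← conj_conj (z k), ← map_mul, conj_conj, add_conj, conj_mul_Ra, re_ofReal_mul, I_re,
    mul_zero, mul_zero, ofReal_zero]

theorem natCast_mul_im_conj_mul_Ra (hk : a k ≠ 0) (z : Fin (n + 1) → ℂ) :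
    (a k : ℝ) * (conj (z k) * Ra n a z k).im = 4 * normSq (z k) := by
  rw [conj_mul_Ra, im_ofReal_mul, I_im, mul_one]
  field_simp [Nat.cast_ne_zero.mpr hk]

theorem natCast_mul_pow_pred_mul_Ra (hk : a k ≠ 0) (z : Fin (n + 1) → ℂ) :
    (a k : ℂ) * z k ^ (a k - 1) * Ra n a z k = 4 * I * z k ^ a k := by
  rw [mul_right_comm, natCast_mul_Ra hk, mul_assoc, mul_pow_sub_one hk]

theorem natCast_mul_im_Ra_mul_conj (hk : a k ≠ 0) (z ξ : Fin (n + 1) → ℂ) :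
    (a k : ℝ) * (Ra n a z k * conj (ξ k)).im
      = 2 * (conj (z k) * ξ k + z k * conj (ξ k)).re := by
  calc (a k : ℝ) * (Ra n a z k * conj (ξ k)).im
      = ((a k : ℂ) * Ra n a z k * conj (ξ k)).im := by
        rw [mul_assoc, ← ofReal_natCast, im_ofReal_mul]
    _ = 4 * (z k * conj (ξ k)).re := by
        rw [natCast_mul_Ra hk, mul_assoc, mul_assoc, ← ofReal_ofNat, im_ofReal_mul, I_mul_im]
    _ = 2 * (conj (z k) * ξ k + z k * conj (ξ k)).re := by
        rw [re_conj_mul_add_mul_conj]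
        ring

end Reeb

/-- On the Brieskorn manifold `Σ_a`: (1) `R_a` is tangent to `Σ_a`; (2) `λ_a(R_a) = 1`;
(3) `ω_a(R_a, ξ) = 0` for every tangent vector `ξ`.  Here tangency of `ξ` at `z` means
`∑ a_k z_k^{a_k-1} ξ_k = 0` and `∑ (conj z_k · ξ_k + z_k · conj ξ_k) = 0`, the contact
form is `λ_a(z)(ξ) = (1/4) ∑ a_k Im(conj z_k · ξ_k)` and the symplectic form is
`ω_a(ξ,ζ) = -(1/2) ∑ a_k Im(ξ_k · conj ζ_k)`. -/
theorem stmt7 (n : ℕ) (a : Fin (n + 1) → ℕ) (ha : ∀ k, 2 ≤ a k)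
    (z : Fin (n + 1) → ℂ) (hz1 : ∑ k, z k ^ a k = 0)
    (hz2 : ∑ k, Complex.normSq (z k) = 1) :
    ((∑ k, (a k : ℂ) * z k ^ (a k - 1) * Ra n a z k = 0) ∧
      (∑ k, ((starRingEnd ℂ) (z k) * Ra n a z k + z k * (starRingEnd ℂ) (Ra n a z k)) = 0)) ∧
    ((1 / 4 : ℝ) * ∑ k, (a k : ℝ) * ((starRingEnd ℂ) (z k) * Ra n a z k).im = 1) ∧
    (∀ ξ : Fin (n + 1) → ℂ,
      (∑ k, (a k : ℂ) * z k ^ (a k - 1) * ξ k = 0) →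
      (∑ k, ((starRingEnd ℂ) (z k) * ξ k + z k * (starRingEnd ℂ) (ξ k)) = 0) →
      (-(1 / 2 : ℝ)) * ∑ k, (a k : ℝ) * (Ra n a z k * (starRingEnd ℂ) (ξ k)).im = 0) := by
  have ha0 (k : Fin (n + 1)) : a k ≠ 0 := (zero_lt_two.trans_le (ha k)).ne'
  refine ⟨⟨?_, ?_⟩, ?_, fun ξ _ hξ => ?_⟩
  · simp_rw [natCast_mul_pow_pred_mul_Ra (ha0 _), ← Finset.mul_sum, hz1, mul_zero]
  · exact Finset.sum_eq_zero fun k _ => conj_mul_Ra_add_mul_conj_Ra z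
  · simp_rw [natCast_mul_im_conj_mul_Ra (ha0 _), ← Finset.mul_sum, hz2]
    norm_num
  · simp_rw [natCast_mul_im_Ra_mul_conj (ha0 _), ← Finset.mul_sum, ← re_sum, hξ, zero_re,
      mul_zero]
end

section
/- Let n ≥ 1 and let a₀, …, aₙ ≥ 2 be integers with ∑_{k=0}^n 1/a_k = 1. Let L ≥ 1 be an integer, set m = #{k : a_k ∣ L}, assume m ≥ 2, and let j be an integer with 0 ≤ j ≤ 2m − 3. Then −(n−1) ≤ 2·( ∑_{k=0}^n ⌈L/a_k⌉ ) − 2L + j − (n−1) ≤ n. -/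
/-- Grading estimate for Brieskorn manifolds with `∑ 1/a_k = 1`: for `L ≥ 1`,
`m = #{k : a_k ∣ L} ≥ 2` and `0 ≤ j ≤ 2m - 3`, the index
`2 ∑ ⌈L/a_k⌉ - 2L + j - (n-1)` lies in `[-n+1, n]`. -/
theorem stmt9 (n : ℕ) (hn : 1 ≤ n) (a : Fin (n + 1) → ℕ) (ha : ∀ k, 2 ≤ a k)
    (hsum : ∑ k, (1 : ℝ) / (a k : ℝ) = 1)
    (L : ℕ) (hL : 1 ≤ L)
    (m : ℕ) (hm : m = (Finset.univ.filter fun k => a k ∣ L).card) (hm2 : 2 ≤ m)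
    (j : ℤ) (hj0 : 0 ≤ j) (hj1 : j ≤ 2 * (m : ℤ) - 3) :
    -((n : ℤ) - 1) ≤ 2 * (∑ k, ⌈(L : ℚ) / (a k : ℚ)⌉) - 2 * (L : ℤ) + j - ((n : ℤ) - 1) ∧
      2 * (∑ k, ⌈(L : ℚ) / (a k : ℚ)⌉) - 2 * (L : ℤ) + j - ((n : ℤ) - 1) ≤ (n : ℤ) := by
  set S : ℤ := ∑ k, ⌈(L : ℚ) / (a k : ℚ)⌉ with hS
  -- sum over ℚ
  have hsumQ : ∑ k, (1 : ℚ) / (a k : ℚ) = 1 := by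
    have : ((∑ k, (1 : ℚ) / (a k : ℚ) : ℚ) : ℝ) = 1 := by
      push_cast
      exact hsum
    exact_mod_cast this
  have hLsum : ∑ k, (L : ℚ) / (a k : ℚ) = (L : ℚ) := by
    have : ∑ k, (L : ℚ) / (a k : ℚ) = (L : ℚ) * ∑ k, (1 : ℚ) / (a k : ℚ) := by
      rw [Finset.mul_sum]
      simp [mul_one_div, div_eq_mul_inv]
    rw [this, hsumQ, mul_one]
  -- lower bound : L ≤ S
  have hlow : (L : ℤ) ≤ S := by
    have : (L : ℚ) ≤ (S : ℚ) := by
      rw [hS]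
      push_cast
      calc (L : ℚ) = ∑ k, (L : ℚ) / (a k : ℚ) := hLsum.symm
        _ ≤ ∑ k, (⌈(L : ℚ) / (a k : ℚ)⌉ : ℚ) :=
          Finset.sum_le_sum fun k _ => Int.le_ceil _
    exact_mod_cast this
  -- upper bound : S + m ≤ L + n + 1
  have hup : S + (m : ℤ) ≤ (L : ℤ) + (n : ℤ) + 1 := by
    have key : (S : ℚ) ≤ (L : ℚ) + ((n : ℚ) + 1 - (m : ℚ)) := by
      have hterm : ∀ k : Fin (n + 1), (⌈(L : ℚ) / (a k : ℚ)⌉ : ℚ) ≤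
          (L : ℚ) / (a k : ℚ) + (if a k ∣ L then 0 else 1) := by
        intro k
        by_cases hdvd : a k ∣ L
        · simp only [hdvd, if_true, add_zero]
          obtain ⟨c, hc⟩ := hdvd
          have hak : (a k : ℚ) ≠ 0 := by
            have := ha k; positivity
          have : (L : ℚ) / (a k : ℚ) = (c : ℚ) := by
            rw [hc]; push_cast; field_simp
          rw [this]
          simp
        · simp only [hdvd, if_false]
          exact (Int.ceil_lt_add_one _).le
      have hsum2 : (S : ℚ) ≤ ∑ k, ((L : ℚ) / (a k : ℚ) + (if a k ∣ L then 0 else 1)) := by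
        rw [hS]; push_cast
        exact Finset.sum_le_sum fun k _ => hterm k
      have hcount : ∑ k : Fin (n + 1), ((if a k ∣ L then (0 : ℚ) else 1)) =
          ((n : ℚ) + 1 - (m : ℚ)) := by
        rw [Finset.sum_ite, Finset.sum_const, Finset.sum_const]
        have hcard : (Finset.univ.filter fun k => ¬ a k ∣ L).card =
            (n + 1) - (Finset.univ.filter fun k => a k ∣ L).card := by
          rw [Finset.filter_not, Finset.card_sdiff_of_subset (Finset.filter_subset _ _)]
          simp
        have hle : (Finset.univ.filter fun k => a k ∣ L).card ≤ n + 1 := by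
          have := Finset.card_filter_le (Finset.univ : Finset (Fin (n+1)))
            (fun k => a k ∣ L)
          simpa using this
        rw [hcard, ← hm]
        have hmle : m ≤ n + 1 := hm ▸ hle
        simp only [smul_zero, nsmul_eq_mul, mul_one, zero_add]
        rw [Nat.cast_sub hmle]
        push_cast
        ring
      rw [Finset.sum_add_distrib, hLsum, hcount] at hsum2
      exact hsum2
    have : (S : ℚ) + (m : ℚ) ≤ (L : ℚ) + (n : ℚ) + 1 := by linarith
    exact_mod_cast this
  constructor <;> omega
end

section
/- Let n ≥ 2, let a ∈ ℝ ∖ {−1, 0, 1}, and consider the unit cotangent bundle S*S^{n−1} = {(x,y) ∈ ℝⁿ×ℝⁿ : ‖x‖ = ‖y‖ = 1, ⟨x,y⟩ = 0}. Let z_a = ((a,0,…,0),(0,1,0,…,0)) and ψ(x,y) = (1/2)‖(x,y) − z_a‖². Then ψ restricted to S*S^{n−1} has exactly four critical points, namely the points (x,y) with x = ±e₁ and y = ±e₂ (signs independent), where e₁, e₂ are the first two standard basis vectors of ℝⁿ. -/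
open scoped RealInnerProductSpace
set_option maxHeartbeats 1000000

/-- The function `ψ = ½‖· - z_a‖²` on the unit cotangent bundle
`S*Sⁿ⁻¹ = {(x,y) : ‖x‖ = ‖y‖ = 1, ⟨x,y⟩ = 0}` has exactly four critical points, namely
`x = ±e₁`, `y = ±e₂`.  Criticality is expressed via Lagrange multipliers: the ambient
gradient `(x - x_a, y - y_a)` is a combination `α(x,0) + β(0,y) + γ(y,x)`. -/
theorem stmt16 (n : ℕ) (hn : 2 ≤ n) (a : ℝ) (ha1 : a ≠ -1) (ha0 : a ≠ 0) (ha2 : a ≠ 1)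
    (x y : EuclideanSpace ℝ (Fin n))
    (hx : ‖x‖ = 1) (hy : ‖y‖ = 1) (hxy : ⟪x, y⟫ = 0) :
    (∃ α β γ : ℝ,
        x - a • EuclideanSpace.single (⟨0, by omega⟩ : Fin n) (1 : ℝ) = α • x + γ • y ∧
        y - EuclideanSpace.single (⟨1, by omega⟩ : Fin n) (1 : ℝ) = β • y + γ • x)
      ↔ ((x = EuclideanSpace.single (⟨0, by omega⟩ : Fin n) (1 : ℝ) ∨
            x = -EuclideanSpace.single (⟨0, by omega⟩ : Fin n) (1 : ℝ)) ∧
          (y = EuclideanSpace.single (⟨1, by omega⟩ : Fin n) (1 : ℝ) ∨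
            y = -EuclideanSpace.single (⟨1, by omega⟩ : Fin n) (1 : ℝ))) := by
  set e1 : EuclideanSpace ℝ (Fin n) := EuclideanSpace.single (⟨0, by omega⟩ : Fin n) (1 : ℝ) with he1
  set e2 : EuclideanSpace ℝ (Fin n) := EuclideanSpace.single (⟨1, by omega⟩ : Fin n) (1 : ℝ) with he2
  have hne : (⟨0, by omega⟩ : Fin n) ≠ (⟨1, by omega⟩ : Fin n) := by
    simp [Fin.ext_iff]
  have hxx : ⟪x, x⟫ = 1 := by
    rw [real_inner_self_eq_norm_sq, hx]; norm_num
  have hyy : ⟪y, y⟫ = 1 := by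
    rw [real_inner_self_eq_norm_sq, hy]; norm_num
  have hyx : ⟪y, x⟫ = 0 := by rw [real_inner_comm]; exact hxy
  have he11 : ⟪e1, e1⟫ = 1 := by
    simp [he1, EuclideanSpace.inner_single_left, EuclideanSpace.single_apply]
  have he22 : ⟪e2, e2⟫ = 1 := by
    simp [he2, EuclideanSpace.inner_single_left, EuclideanSpace.single_apply]
  have hn1 : ‖e1‖ = 1 := by simp [he1, EuclideanSpace.norm_single]
  have hn2 : ‖e2‖ = 1 := by simp [he2, EuclideanSpace.norm_single]
  constructor
  · rintro ⟨α, β, γ, h1, h2⟩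
    set x0 : ℝ := ⟪e1, x⟫ with hx0
    set x1 : ℝ := ⟪e2, x⟫ with hx1
    set y0 : ℝ := ⟪e1, y⟫ with hy0
    set y1 : ℝ := ⟪e2, y⟫ with hy1
    have h12 : ⟪e2, e1⟫ = 0 := by
      simp [he1, he2, EuclideanSpace.inner_single_left, EuclideanSpace.single_apply, hne]
    have h21 : ⟪e1, e2⟫ = 0 := by rw [real_inner_comm]; exact h12
    have cx1 : ⟪x, e1⟫ = x0 := real_inner_comm e1 x
    have cx2 : ⟪x, e2⟫ = x1 := real_inner_comm e2 x
    have cy1 : ⟪y, e1⟫ = y0 := real_inner_comm e1 y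
    have cy2 : ⟪y, e2⟫ = y1 := real_inner_comm e2 y
    have E1 : 1 - a * x0 = α := by
      have := congrArg (fun v => ⟪v, x⟫) h1
      simp only [inner_sub_left, inner_add_left, real_inner_smul_left, hxx, hyx,
        cx1, mul_one, mul_zero, add_zero] at this
      linarith
    have E2 : -(a * y0) = γ := by
      have := congrArg (fun v => ⟪v, y⟫) h1
      simp only [inner_sub_left, inner_add_left, real_inner_smul_left, hyy, hxy,
        cy1, mul_one, mul_zero, zero_add] at this
      linarith
    have E3 : -x1 = γ := by
      have := congrArg (fun v => ⟪v, x⟫) h2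
      simp only [inner_sub_left, inner_add_left, real_inner_smul_left, hxx, hyx,
        cx2, mul_one, mul_zero, zero_add] at this
      linarith
    have E4 : 1 - y1 = β := by
      have := congrArg (fun v => ⟪v, y⟫) h2
      simp only [inner_sub_left, inner_add_left, real_inner_smul_left, hyy, hxy,
        cy2, mul_one, mul_zero, add_zero] at this
      linarith
    have E5 : x0 - a = α * x0 + γ * y0 := by
      have := congrArg (fun v => ⟪v, e1⟫) h1
      simp only [inner_sub_left, inner_add_left, real_inner_smul_left, he11,
        cx1, cy1, mul_one] at this
      linarith
    have E7 : y0 = β * y0 + γ * x0 := by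
      have := congrArg (fun v => ⟪v, e1⟫) h2
      simp only [inner_sub_left, inner_add_left, real_inner_smul_left, h12,
        cx1, cy1, sub_zero] at this
      linarith
    have E8 : y1 - 1 = β * y1 + γ * x1 := by
      have := congrArg (fun v => ⟪v, e2⟫) h2
      simp only [inner_sub_left, inner_add_left, real_inner_smul_left, he22,
        cx2, cy2, mul_one] at this
      linarith
    rw [← E1, ← E2] at E5
    rw [← E4, ← E2] at E7 E8
    have hyx1 : x1 = a * y0 := by linarith [E2, E3]
    have ha2' : a ^ 2 ≠ 1 := by
      intro h
      have h0 : (a - 1) * (a + 1) = 0 := by linear_combination h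
      rcases mul_eq_zero.1 h0 with h' | h'
      · exact ha2 (by linarith)
      · exact ha1 (by linarith)
    have hy0z : y0 = 0 := by
      by_contra hy0ne
      have hA : a * (x0 ^ 2 + y0 ^ 2 - 1) = 0 := by linear_combination E5
      have hA' : x0 ^ 2 + y0 ^ 2 = 1 := by
        rcases mul_eq_zero.1 hA with h' | h'
        · exact absurd h' ha0
        · linarith
      have hD : y0 * (y1 + a * x0) = 0 := by linear_combination E7
      have hC : y1 = -(a * x0) := by
        rcases mul_eq_zero.1 hD with h' | h'
        · exact absurd h' hy0ne
        · linarith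
      have hB : y1 ^ 2 + a ^ 2 * y0 ^ 2 = 1 := by
        linear_combination E8 - a * y0 * hyx1
      exact ha2' (by linear_combination hB - a^2 * hA' - (y1 - a * x0) * hC)
    have hx1z : x1 = 0 := by rw [hyx1, hy0z, mul_zero]
    have hgz : γ = 0 := by rw [← E3, hx1z, neg_zero]
    have hx02 : (x0 - 1) * (x0 + 1) = 0 := by
      have hA : a * (x0 ^ 2 + y0 ^ 2 - 1) = 0 := by linear_combination E5
      rcases mul_eq_zero.1 hA with h' | h'
      · exact absurd h' ha0
      · rw [hy0z] at h'; linear_combination h'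
    have hy12 : (y1 - 1) * (y1 + 1) = 0 := by
      linear_combination E8 - a * x1 * hy0z
    constructor
    · rcases mul_eq_zero.1 hx02 with h' | h'
      · left
        have h1' : ⟪e1, x⟫ = 1 := by rw [← hx0]; linarith
        exact ((inner_eq_one_iff_of_norm_eq_one hn1 hx).mp h1').symm
      · right
        have h1' : ⟪-e1, x⟫ = 1 := by
          rw [inner_neg_left, ← hx0]; linarith
        have hn1' : ‖(-e1 : EuclideanSpace ℝ (Fin n))‖ = 1 := by rw [norm_neg]; exact hn1
        exact ((inner_eq_one_iff_of_norm_eq_one hn1' hx).mp h1').symm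
    · rcases mul_eq_zero.1 hy12 with h' | h'
      · left
        have h1' : ⟪e2, y⟫ = 1 := by rw [← hy1]; linarith
        exact ((inner_eq_one_iff_of_norm_eq_one hn2 hy).mp h1').symm
      · right
        have h1' : ⟪-e2, y⟫ = 1 := by
          rw [inner_neg_left, ← hy1]; linarith
        have hn2' : ‖(-e2 : EuclideanSpace ℝ (Fin n))‖ = 1 := by rw [norm_neg]; exact hn2
        exact ((inner_eq_one_iff_of_norm_eq_one hn2' hy).mp h1').symm
  · rintro ⟨hX, hY⟩
    rcases hX with rfl | rfl <;> rcases hY with rfl | rfl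
    · exact ⟨1 - a, 0, 0, by module, by module⟩
    · exact ⟨1 - a, 2, 0, by module, by module⟩
    · exact ⟨1 + a, 0, 0, by module, by module⟩
    · exact ⟨1 + a, 2, 0, by module, by module⟩
end

section
/- Let Φ : ℝ⁴ → ℝ³×ℝ³ be as follows: Φ₁(s) = (s₁²+s₂²−s₃²−s₄², 2(s₂s₃+s₁s₄), 2(s₁s₃−s₂s₄)), Φ₂(s) = (2(s₂s₃−s₁s₄), s₁²+s₃²−s₂²−s₄², −2(s₁s₂+s₃s₄)). For s ∈ S³ define v₁(s) = (s₂,−s₁,−s₄,s₃), v₂(s) = (−s₃,−s₄,s₁,s₂), v₃(s) = (−s₄,s₃,−s₂,s₁) (an orthonormal basis of T_sS³). Then the differential of Φ at s satisfies: DΦ_s(v₁) = 2·(0, Φ₁(s)×Φ₂(s)), DΦ_s(v₂) = 2·(Φ₁(s)×Φ₂(s), 0), and DΦ_s(v₃) = 2·(Φ₂(s), −Φ₁(s)), where × is the cross product in ℝ³. In particular the three images are pairwise orthogonal with norms 2, 2 and 2√2, so Φ|_{S³} is an immersion (hence a local diffeomorphism onto S*S²). -/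
/-!
`Φ` is quadratic, so along a line `Φ (s + t v) = Φ s + t DΦ_s(v) + t² Φ v`, and each
`DΦ_s(vᵢ)` is read off as the coefficient of `t`, a polynomial identity in `s`. The quartic
`Φ₁ × Φ₂` equals `‖s‖² Φ₃` for a quadratic `Φ₃`, which is what these coefficients produce;
on `S³` the two agree. Orthogonality then comes from `x × y ⊥ x, y`, and the norms from
Lagrange's identity together with `‖Φ₁ s‖ = ‖Φ₂ s‖ = ‖s‖²` and `⟪Φ₁ s, Φ₂ s⟫ = 0`.
-/

open scoped RealInnerProductSpace

/-- First component of `Φ : ℝ⁴ → ℝ³ × ℝ³`. -/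
noncomputable def Phi1 (s : EuclideanSpace ℝ (Fin 4)) : EuclideanSpace ℝ (Fin 3) :=
  (WithLp.equiv 2 (Fin 3 → ℝ)).symm
    ![s 0 ^ 2 + s 1 ^ 2 - s 2 ^ 2 - s 3 ^ 2,
      2 * (s 1 * s 2 + s 0 * s 3),
      2 * (s 0 * s 2 - s 1 * s 3)]

/-- Second component of `Φ : ℝ⁴ → ℝ³ × ℝ³`. -/
noncomputable def Phi2 (s : EuclideanSpace ℝ (Fin 4)) : EuclideanSpace ℝ (Fin 3) :=
  (WithLp.equiv 2 (Fin 3 → ℝ)).symm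
    ![2 * (s 1 * s 2 - s 0 * s 3),
      s 0 ^ 2 + s 2 ^ 2 - s 1 ^ 2 - s 3 ^ 2,
      -2 * (s 0 * s 1 + s 2 * s 3)]

/-- The map `Φ = (Φ₁, Φ₂)`. -/
noncomputable def Phi (s : EuclideanSpace ℝ (Fin 4)) :
    EuclideanSpace ℝ (Fin 3) × EuclideanSpace ℝ (Fin 3) :=
  (Phi1 s, Phi2 s)

/-- The orthonormal frame `v₁, v₂, v₃` of `T_sS³`. -/
noncomputable def v1 (s : EuclideanSpace ℝ (Fin 4)) : EuclideanSpace ℝ (Fin 4) :=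
  (WithLp.equiv 2 (Fin 4 → ℝ)).symm ![s 1, -s 0, -s 3, s 2]

noncomputable def v2 (s : EuclideanSpace ℝ (Fin 4)) : EuclideanSpace ℝ (Fin 4) :=
  (WithLp.equiv 2 (Fin 4 → ℝ)).symm ![-s 2, -s 3, s 0, s 1]

noncomputable def v3 (s : EuclideanSpace ℝ (Fin 4)) : EuclideanSpace ℝ (Fin 4) :=
  (WithLp.equiv 2 (Fin 4 → ℝ)).symm ![-s 3, s 2, -s 1, s 0]

/-- The cross product on `ℝ³`. -/
noncomputable def cross3 (x y : EuclideanSpace ℝ (Fin 3)) : EuclideanSpace ℝ (Fin 3) :=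
  (WithLp.equiv 2 (Fin 3 → ℝ)).symm
    (crossProduct (WithLp.equiv 2 (Fin 3 → ℝ) x) (WithLp.equiv 2 (Fin 3 → ℝ) y))

/-- The Euclidean inner product on `ℝ³ × ℝ³`. -/
noncomputable def ipP (u w : EuclideanSpace ℝ (Fin 3) × EuclideanSpace ℝ (Fin 3)) : ℝ :=
  ⟪u.1, w.1⟫ + ⟪u.2, w.2⟫

theorem DifferentiableAt.fderiv_apply_eq_of_add_smul_eq {E F : Type*}
    [NormedAddCommGroup E] [NormedSpace ℝ E] [NormedAddCommGroup F] [NormedSpace ℝ F]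
    {f : E → F} {x v : E} (w c : F) (hf : DifferentiableAt ℝ f x)
    (h : ∀ t : ℝ, f (x + t • v) = f x + t • w + t ^ 2 • c) :
    fderiv ℝ f x v = w := by
  rw [← hf.lineDeriv_eq_fderiv]
  refine HasLineDerivAt.lineDeriv ?_
  have hpoly : HasDerivAt (fun t : ℝ => f x + t • w + t ^ 2 • c) w 0 := by
    simpa using ((hasDerivAt_id (0 : ℝ)).smul_const w).const_add (f x) |>.fun_add
      ((hasDerivAt_pow 2 (0 : ℝ)).smul_const c)
  simpa only [HasLineDerivAt, h] using hpoly

section CrossProduct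

variable (x y : EuclideanSpace ℝ (Fin 3))

lemma inner_cross3_left : ⟪cross3 x y, x⟫ = 0 := by
  simp [cross3, EuclideanSpace.inner_eq_star_dotProduct, dot_self_cross]

lemma inner_cross3_right : ⟪cross3 x y, y⟫ = 0 := by
  simp [cross3, EuclideanSpace.inner_eq_star_dotProduct, dot_cross_self]

lemma norm_cross3_sq : ‖cross3 x y‖ ^ 2 = ‖x‖ ^ 2 * ‖y‖ ^ 2 - ⟪x, y⟫ ^ 2 := by
  simp only [← real_inner_self_eq_norm_sq, cross3, EuclideanSpace.inner_eq_star_dotProduct]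
  simp [cross_dot_cross, dotProduct_comm, sq]

end CrossProduct

lemma EuclideanSpace.norm_sq_fin_four (s : EuclideanSpace ℝ (Fin 4)) :
    ‖s‖ ^ 2 = s 0 ^ 2 + s 1 ^ 2 + s 2 ^ 2 + s 3 ^ 2 := by
  simp [EuclideanSpace.norm_sq_eq, Fin.sum_univ_four]

lemma EuclideanSpace.norm_sq_fin_three (x : EuclideanSpace ℝ (Fin 3)) :
    ‖x‖ ^ 2 = x 0 ^ 2 + x 1 ^ 2 + x 2 ^ 2 := by
  simp [EuclideanSpace.norm_sq_eq, Fin.sum_univ_three]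

noncomputable def Phi3 (s : EuclideanSpace ℝ (Fin 4)) : EuclideanSpace ℝ (Fin 3) :=
  (WithLp.equiv 2 (Fin 3 → ℝ)).symm
    ![-2 * (s 1 * s 3 + s 0 * s 2),
      2 * (s 0 * s 1 - s 2 * s 3),
      s 0 ^ 2 - s 1 ^ 2 - s 2 ^ 2 + s 3 ^ 2]

section Phi

variable (s : EuclideanSpace ℝ (Fin 4))

lemma norm_Phi1 : ‖Phi1 s‖ = ‖s‖ ^ 2 := by
  rw [← pow_left_inj₀ (norm_nonneg _) (by positivity) two_ne_zero,
    EuclideanSpace.norm_sq_fin_three, EuclideanSpace.norm_sq_fin_four]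
  simp [Phi1]
  ring

lemma norm_Phi2 : ‖Phi2 s‖ = ‖s‖ ^ 2 := by
  rw [← pow_left_inj₀ (norm_nonneg _) (by positivity) two_ne_zero,
    EuclideanSpace.norm_sq_fin_three, EuclideanSpace.norm_sq_fin_four]
  simp [Phi2]
  ring

lemma inner_Phi1_Phi2 : ⟪Phi1 s, Phi2 s⟫ = 0 := by
  simp [Phi1, Phi2, EuclideanSpace.inner_eq_star_dotProduct]
  ring

lemma cross3_Phi1_Phi2 : cross3 (Phi1 s) (Phi2 s) = ‖s‖ ^ 2 • Phi3 s := by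
  rw [EuclideanSpace.norm_sq_fin_four]
  ext i
  fin_cases i <;> simp [cross3, Phi1, Phi2, Phi3, cross_apply] <;> ring

lemma differentiable_Phi : Differentiable ℝ Phi := by
  have h := (PiLp.continuousLinearEquiv 2 ℝ (fun _ : Fin 3 => ℝ)).symm.differentiable
  unfold Phi Phi1 Phi2
  refine Differentiable.prodMk (h.comp ?_) (h.comp ?_) <;>
  refine differentiable_pi.2 fun i => ?_ <;> fin_cases i <;> simp <;> fun_prop

lemma fderiv_Phi_v1 : fderiv ℝ Phi s (v1 s) = (0, (2 : ℝ) • Phi3 s) :=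
  (differentiable_Phi s).fderiv_apply_eq_of_add_smul_eq _ (Phi (v1 s)) fun t => by
    ext i <;> fin_cases i <;> simp [Phi, Phi1, Phi2, Phi3, v1] <;> ring

lemma fderiv_Phi_v2 : fderiv ℝ Phi s (v2 s) = ((2 : ℝ) • Phi3 s, 0) :=
  (differentiable_Phi s).fderiv_apply_eq_of_add_smul_eq _ (Phi (v2 s)) fun t => by
    ext i <;> fin_cases i <;> simp [Phi, Phi1, Phi2, Phi3, v2] <;> ring

lemma fderiv_Phi_v3 : fderiv ℝ Phi s (v3 s) = ((2 : ℝ) • Phi2 s, (-2 : ℝ) • Phi1 s) :=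
  (differentiable_Phi s).fderiv_apply_eq_of_add_smul_eq _ (Phi (v3 s)) fun t => by
    ext i <;> fin_cases i <;> simp [Phi, Phi1, Phi2, v3] <;> ring

end Phi

/-- For `s ∈ S³`, the differential of `Φ` satisfies `DΦ_s(v₁) = 2(0, Φ₁ × Φ₂)`,
`DΦ_s(v₂) = 2(Φ₁ × Φ₂, 0)`, `DΦ_s(v₃) = 2(Φ₂, -Φ₁)`; in particular the images are
pairwise orthogonal of (Euclidean) norms `2, 2, 2√2`. -/
theorem stmt17 (s : EuclideanSpace ℝ (Fin 4)) (hs : ‖s‖ = 1) :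
    fderiv ℝ Phi s (v1 s) = ((0 : EuclideanSpace ℝ (Fin 3)),
        (2 : ℝ) • cross3 (Phi1 s) (Phi2 s)) ∧
    fderiv ℝ Phi s (v2 s) = ((2 : ℝ) • cross3 (Phi1 s) (Phi2 s),
        (0 : EuclideanSpace ℝ (Fin 3))) ∧
    fderiv ℝ Phi s (v3 s) = ((2 : ℝ) • Phi2 s, (-2 : ℝ) • Phi1 s) ∧
    ipP (fderiv ℝ Phi s (v1 s)) (fderiv ℝ Phi s (v2 s)) = 0 ∧
    ipP (fderiv ℝ Phi s (v1 s)) (fderiv ℝ Phi s (v3 s)) = 0 ∧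
    ipP (fderiv ℝ Phi s (v2 s)) (fderiv ℝ Phi s (v3 s)) = 0 ∧
    ipP (fderiv ℝ Phi s (v1 s)) (fderiv ℝ Phi s (v1 s)) = 4 ∧
    ipP (fderiv ℝ Phi s (v2 s)) (fderiv ℝ Phi s (v2 s)) = 4 ∧
    ipP (fderiv ℝ Phi s (v3 s)) (fderiv ℝ Phi s (v3 s)) = 8 := by
  have hcross : cross3 (Phi1 s) (Phi2 s) = Phi3 s := by
    simp [cross3_Phi1_Phi2, hs]
  have hnorm : ‖cross3 (Phi1 s) (Phi2 s)‖ ^ 2 = 1 := by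
    rw [norm_cross3_sq, norm_Phi1, norm_Phi2, inner_Phi1_Phi2, hs]
    norm_num
  rw [fderiv_Phi_v1, fderiv_Phi_v2, fderiv_Phi_v3, ← hcross]
  refine ⟨rfl, rfl, rfl, ?_, ?_, ?_, ?_, ?_, ?_⟩ <;>
    simp [ipP, inner_smul_left, inner_smul_right, inner_cross3_left, inner_cross3_right,
      norm_smul, mul_pow, hnorm, norm_Phi1, norm_Phi2, hs] <;>
    norm_num
end
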